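/- arXiv:1002.2703 — 4 statements merged into one kernel-verified Lean document; each statement's English description precedes it below -/
import Mathlib

section
/- Let (R,m) be a Noetherian local ring of characteristic p > 0, M a finitely generated R-module, and L ⊆ N ⊆ M submodules with N ⊆ (L + N^Fsp_M)^F_M. Then N ⊆ L^F_M. -/
open TensorProduct

/-- `R` viewed as an `R`-algebra via the `e`-th iterate of the Frobenius endomorphism. -/
def FrobTwist (R : Type*) [CommRing R] (p : ℕ) [Fact p.Prime] [CharP R p] (_e : ℕ) :
    Type _ := R

instance (R : Type*) [CommRing R] (p : ℕ) [Fact p.Prime] [CharP R p] (e : ℕ) :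
    CommRing (FrobTwist R p e) := ‹CommRing R›

noncomputable instance (R : Type*) [CommRing R] (p : ℕ) [Fact p.Prime] [CharP R p] (e : ℕ) :
    Algebra R (FrobTwist R p e) := (iterateFrobenius R p e).toAlgebra

/-- The `e`-th Frobenius functor applied to the `R`-module `M`:
`F^e(M) = FrobTwist R p e ⊗[R] M`, a module over `FrobTwist R p e` (which is `R` as a ring). -/
def FrobModule (R : Type*) [CommRing R] (p : ℕ) [Fact p.Prime] [CharP R p]
    (M : Type*) [AddCommGroup M] [Module R M] (e : ℕ) : Type _ :=
  FrobTwist R p e ⊗[R] M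

section
variable (R : Type*) [CommRing R] (p : ℕ) [Fact p.Prime] [CharP R p]
  (M : Type*) [AddCommGroup M] [Module R M] (e : ℕ)

noncomputable instance : AddCommGroup (FrobModule R p M e) :=
  inferInstanceAs (AddCommGroup (FrobTwist R p e ⊗[R] M))

noncomputable instance : Module (FrobTwist R p e) (FrobModule R p M e) :=
  inferInstanceAs (Module (FrobTwist R p e) (FrobTwist R p e ⊗[R] M))

/-- The image `z^q := F^e(z)` of `z ∈ M` in `F^e(M)`. -/
noncomputable def frobMap (z : M) : FrobModule R p M e := (1 : FrobTwist R p e) ⊗ₜ[R] z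

/-- The Frobenius power `N^{[q]}_M ⊆ F^e(M)` of a submodule `N ⊆ M`, `q = p^e`. -/
noncomputable def frobPow (N : Submodule R M) : Submodule (FrobTwist R p e) (FrobModule R p M e) :=
  Submodule.span (FrobTwist R p e) (frobMap R p M e '' N)

/-- An ideal of `R`, regarded as an ideal of `FrobTwist R p e` (the same ring). -/
def idealTwist (I : Ideal R) : Ideal (FrobTwist R p e) := I

/-- The Frobenius closure `N^F_M` of a submodule `N ⊆ M`, as a set. -/
noncomputable def frobClSet (N : Submodule R M) : Set M :=
  {z | ∃ e : ℕ, frobMap R p M e z ∈ frobPow R p M e N}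

/-- The special part of the Frobenius closure `N^{Fsp}_M`, as a set:
elements `z` with `z^q ∈ m·N^{[q]}_M` for some `q = p^e`. -/
noncomputable def frobSpSet [IsLocalRing R] (N : Submodule R M) : Set M :=
  {z | ∃ e : ℕ, frobMap R p M e z ∈
    idealTwist R p e (IsLocalRing.maximalIdeal R) • frobPow R p M e N}

end

/-!
Both `z ↦ [z^q ∈ (L + S)^[q]]` and `z ↦ [z^q ∈ m·N^[q]]` persist when `q` grows, since the
Frobenius `F^e(M) → F^{e+e'}(M)` maps `K^[q]` into `K^[qq']` and `m` into `m`. As `M` is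
Noetherian, finitely many generators of `N` and of `S` then give one `q` with
`N^[q] ⊆ (L + S)^[q] = L^[q] + S^[q] ⊆ L^[q] + m·N^[q]`, and Nakayama's lemma in the finitely
generated module `F^e(M)` yields `N^[q] ⊆ L^[q]`.
-/

open Filter IsLocalRing

lemma AlgHom.rTensor_smul {R A B M : Type*} [CommSemiring R] [CommSemiring A] [CommSemiring B]
    [Algebra R A] [Algebra R B] [AddCommMonoid M] [Module R M] (f : A →ₐ[R] B) (a : A)
    (x : A ⊗[R] M) : f.toLinearMap.rTensor M (a • x) = f a • f.toLinearMap.rTensor M x := by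
  induction x using TensorProduct.induction_on with
  | zero => simp
  | tmul b m => simp [smul_tmul']
  | add x y hx hy => rw [smul_add, map_add, map_add, hx, hy, smul_add]

section Frobenius

variable (R : Type*) [CommRing R] (p : ℕ) [Fact p.Prime] [CharP R p]
  (M : Type*) [AddCommGroup M] [Module R M]

instance (e : ℕ) [IsNoetherianRing R] : IsNoetherianRing (FrobTwist R p e) :=
  inferInstanceAs (IsNoetherianRing R)

instance (e : ℕ) [IsLocalRing R] : IsLocalRing (FrobTwist R p e) :=
  inferInstanceAs (IsLocalRing R)

instance (e : ℕ) [Module.Finite R M] : Module.Finite (FrobTwist R p e) (FrobModule R p M e) :=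
  inferInstanceAs (Module.Finite (FrobTwist R p e) (FrobTwist R p e ⊗[R] M))

noncomputable def frobTwistStep (e e' : ℕ) : FrobTwist R p e →ₐ[R] FrobTwist R p (e + e') :=
  { iterateFrobenius R p e' with
    commutes' r := by
      change (r ^ p ^ e) ^ p ^ e' = r ^ p ^ (e + e')
      rw [← pow_mul, ← pow_add] }

noncomputable def frobModuleStep (e e' : ℕ) :
    FrobModule R p M e →ₛₗ[(frobTwistStep R p e e' : FrobTwist R p e →+* FrobTwist R p (e + e'))]
      FrobModule R p M (e + e') where
  toFun := (frobTwistStep R p e e').toLinearMap.rTensor M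
  map_add' := map_add _
  map_smul' := (frobTwistStep R p e e').rTensor_smul

lemma frobModuleStep_frobMap (e e' : ℕ) (z : M) :
    frobModuleStep R p M e e' (frobMap R p M e z) = frobMap R p M (e + e') z := by
  change (frobTwistStep R p e e').toLinearMap.rTensor M (1 ⊗ₜ z) = 1 ⊗ₜ z
  rw [LinearMap.rTensor_tmul, AlgHom.toLinearMap_apply, map_one]

lemma frobMap_add (e : ℕ) (z w : M) :
    frobMap R p M e (z + w) = frobMap R p M e z + frobMap R p M e w :=
  tmul_add _ z w

noncomputable def frobMapₛₗ (e : ℕ) :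
    M →ₛₗ[algebraMap R (FrobTwist R p e)] FrobModule R p M e where
  toFun := frobMap R p M e
  map_add' := frobMap_add R p M e
  map_smul' r z := by
    change (1 : FrobTwist R p e) ⊗ₜ[R] (r • z) =
      algebraMap R (FrobTwist R p e) r • ((1 : FrobTwist R p e) ⊗ₜ[R] z)
    rw [← smul_tmul, Algebra.smul_def, smul_tmul', smul_eq_mul]

variable {R p M}

lemma frobMap_mem_frobPow {e : ℕ} {K : Submodule R M} {z : M} (hz : z ∈ K) :
    frobMap R p M e z ∈ frobPow R p M e K :=
  Submodule.subset_span ⟨z, hz, rfl⟩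

lemma frobPow_le_iff {e : ℕ} {K : Submodule R M}
    {Q : Submodule (FrobTwist R p e) (FrobModule R p M e)} :
    frobPow R p M e K ≤ Q ↔ ∀ z ∈ K, frobMap R p M e z ∈ Q := by
  rw [frobPow, Submodule.span_le, Set.image_subset_iff]
  rfl

lemma frobPow_mono {e : ℕ} {K K' : Submodule R M} (h : K ≤ K') :
    frobPow R p M e K ≤ frobPow R p M e K' :=
  frobPow_le_iff.2 fun _ hz ↦ frobMap_mem_frobPow (h hz)

lemma frobPow_sup (e : ℕ) (K K' : Submodule R M) :
    frobPow R p M e (K ⊔ K') = frobPow R p M e K ⊔ frobPow R p M e K' := by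
  refine le_antisymm (frobPow_le_iff.2 fun z hz ↦ ?_)
    (sup_le (frobPow_mono le_sup_left) (frobPow_mono le_sup_right))
  obtain ⟨a, ha, b, hb, rfl⟩ := Submodule.mem_sup.1 hz
  rw [frobMap_add]
  exact Submodule.add_mem_sup (frobMap_mem_frobPow ha) (frobMap_mem_frobPow hb)

def FrobStable (P : ∀ e, Submodule (FrobTwist R p e) (FrobModule R p M e)) : Prop :=
  ∀ e e' z, frobMap R p M e z ∈ P e → frobMap R p M (e + e') z ∈ P (e + e')

lemma frobStable_of_le_comap {P : ∀ e, Submodule (FrobTwist R p e) (FrobModule R p M e)}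
    (h : ∀ e e', P e ≤ (P (e + e')).comap (frobModuleStep R p M e e')) : FrobStable P :=
  fun e e' z hz ↦ frobModuleStep_frobMap R p M e e' z ▸ h e e' hz

lemma frobPow_le_comap_frobModuleStep (K : Submodule R M) (e e' : ℕ) :
    frobPow R p M e K ≤ (frobPow R p M (e + e') K).comap (frobModuleStep R p M e e') :=
  frobPow_le_iff.2 fun z hz ↦ by
    rw [Submodule.mem_comap, frobModuleStep_frobMap]
    exact frobMap_mem_frobPow hz

lemma frobStable_frobPow (K : Submodule R M) : FrobStable (frobPow R p M · K) :=
  frobStable_of_le_comap (frobPow_le_comap_frobModuleStep K)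

lemma frobStable_maximalIdeal_smul_frobPow [IsLocalRing R] (K : Submodule R M) :
    FrobStable fun e ↦ idealTwist R p e (maximalIdeal R) • frobPow R p M e K :=
  frobStable_of_le_comap fun e e' ↦ Submodule.smul_le.2 fun r hr x hx ↦ by
    rw [Submodule.mem_comap, LinearMap.map_smulₛₗ]
    refine Submodule.smul_mem_smul ?_ (frobPow_le_comap_frobModuleStep K e e' hx)
    change r ^ p ^ e' ∈ maximalIdeal R
    exact Ideal.pow_mem_of_mem _ hr _ (pow_pos (Fact.out : p.Prime).pos e')

lemma FrobStable.eventually {P : ∀ e, Submodule (FrobTwist R p e) (FrobModule R p M e)}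
    (hP : FrobStable P) {z : M} (hz : ∃ e, frobMap R p M e z ∈ P e) :
    ∀ᶠ e in atTop, frobMap R p M e z ∈ P e := by
  obtain ⟨e, he⟩ := hz
  filter_upwards [eventually_ge_atTop e] with e' hee'
  obtain ⟨k, rfl⟩ := Nat.exists_eq_add_of_le hee'
  exact hP e k z he

lemma FrobStable.eventually_forall_mem [IsNoetherian R M]
    {P : ∀ e, Submodule (FrobTwist R p e) (FrobModule R p M e)} (hP : FrobStable P)
    {T : Submodule R M} (hT : ∀ z ∈ T, ∃ e, frobMap R p M e z ∈ P e) :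
    ∀ᶠ e in atTop, ∀ z ∈ T, frobMap R p M e z ∈ P e := by
  obtain ⟨s, rfl⟩ := IsNoetherian.noetherian T
  filter_upwards [(eventually_all_finset s).2 fun z hz ↦ hP.eventually
    (hT z (Submodule.subset_span hz))] with e he
  exact Submodule.span_le (p := (P e).comap (frobMapₛₗ R p M e)) |>.2 he

end Frobenius

theorem frobSp_nakayama_general
    (R : Type*) [CommRing R] [IsNoetherianRing R] [IsLocalRing R]
    (p : ℕ) [Fact p.Prime] [CharP R p]
    (M : Type*) [AddCommGroup M] [Module R M] [Module.Finite R M]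
    (L N : Submodule R M)
    (S : Submodule R M) (hS : (S : Set M) = frobSpSet R p M N)
    (h : (N : Set M) ⊆ frobClSet R p M (L ⊔ S)) :
    (N : Set M) ⊆ frobClSet R p M L := by
  obtain ⟨E, hSE, hNE⟩ :=
    (((frobStable_maximalIdeal_smul_frobPow N).eventually_forall_mem fun _ hz ↦ hS.le hz).and
      ((frobStable_frobPow (L ⊔ S)).eventually_forall_mem fun _ hz ↦ h hz)).exists
  have hNL : frobPow R p M E N ≤
      frobPow R p M E L ⊔ idealTwist R p E (maximalIdeal R) • frobPow R p M E N :=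
    calc frobPow R p M E N ≤ frobPow R p M E (L ⊔ S) := frobPow_le_iff.2 hNE
      _ = frobPow R p M E L ⊔ frobPow R p M E S := frobPow_sup E L S
      _ ≤ _ := sup_le_sup_left (frobPow_le_iff.2 hSE) _
  exact fun z hz ↦ ⟨E, Submodule.le_of_le_smul_of_le_jacobson_bot (IsNoetherian.noetherian _)
    (maximalIdeal_le_jacobson _) hNL (frobMap_mem_frobPow hz)⟩

/-- (Nakayama property of `Fsp`.) Let `(R,m)` be Noetherian local of
characteristic `p > 0`, `M` finitely generated, and `L ⊆ N ⊆ M` submodules with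
`N ⊆ (L + N^{Fsp}_M)^F_M`.  Then `N ⊆ L^F_M`. -/
theorem frobSp_nakayama
    (R : Type*) [CommRing R] [IsNoetherianRing R] [IsLocalRing R]
    (p : ℕ) [Fact p.Prime] [CharP R p]
    (M : Type*) [AddCommGroup M] [Module R M] [Module.Finite R M]
    (L N : Submodule R M) (hLN : L ≤ N)
    (S : Submodule R M) (hS : (S : Set M) = frobSpSet R p M N)
    (h : (N : Set M) ⊆ frobClSet R p M (L ⊔ S)) :
    (N : Set M) ⊆ frobClSet R p M L :=
  frobSp_nakayama_general R p M L N S hS h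
end

section
/- Let (R,m) be Noetherian local of characteristic p > 0 and z_1,...,z_n F-independent elements of a finitely generated R-module M. Then every minimal generating set of the submodule L = (z_1,...,z_n) is F-independent; i.e., L is strongly F-independent. -/
open TensorProduct

/-!
Suppose `y_i^q = ∑_{j ≠ i} c_j y_j^q`, i.e. `∑_j D_j y_j^q = 0` with `D_i` a unit, and write
`y_j = ∑_k a_{jk} z_k`. Then `∑_k w_k z_k^q = 0` with `w_k = ∑_j D_j a_{jk}^q`. Minimality of the
`y_j` and Nakayama make the rows of `a` linearly independent modulo `𝔪`; a right inverse of
`a mod 𝔪` is carried by Frobenius to a right inverse of `a^[q] mod 𝔪`, so its rows stay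
independent. As `D_i ∉ 𝔪`, some `w_k` is then a unit, and `z_k^q` lies in the span of the other
`z_l^q`, contradicting the `F`-independence of the `z_k`.
-/

open Submodule

theorem setOf_exists_ne_and_eq_eq_image_compl {ι V : Type*} (v : ι → V) (i : ι) :
    {x | ∃ j, j ≠ i ∧ x = v j} = v '' {i}ᶜ := by
  ext x
  simp [eq_comm]

theorem sum_smul_sum_smul {ι κ A V : Type*} [Semiring A] [AddCommMonoid V] [Module A V]
    (s : Finset ι) (t : Finset κ) (c : ι → A) (b : ι → κ → A) (x : κ → V) :
    ∑ j ∈ s, c j • ∑ k ∈ t, b j k • x k = ∑ k ∈ t, (∑ j ∈ s, c j * b j k) • x k := by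
  simp only [Finset.smul_sum, Finset.sum_smul, mul_smul]
  exact Finset.sum_comm

theorem mem_span_image_compl_iff_exists_isUnit {ι A V : Type*} [Fintype ι] [Ring A]
    [AddCommGroup V] [Module A V] (v : ι → V) (k : ι) :
    v k ∈ span A (v '' {k}ᶜ) ↔ ∃ D : ι → A, IsUnit (D k) ∧ ∑ j, D j • v j = 0 := by
  classical
  constructor
  · intro hk
    obtain ⟨l, hl, hlk⟩ := (Finsupp.mem_span_image_iff_linearCombination A).1 hk
    refine ⟨⇑l - Pi.single k 1, ?_, ?_⟩
    · simp [Finsupp.notMem_support_iff.1 fun h => hl h rfl]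
    · simp [sub_smul, Finset.sum_sub_distrib, ← hlk, Finsupp.linearCombination_apply,
        Finsupp.sum_fintype]
  · rintro ⟨D, hDk, hD⟩
    have hsplit : D k • v k = -∑ j ∈ Finset.univ.erase k, D j • v j := by
      rw [eq_neg_iff_add_eq_zero, Finset.add_sum_erase _ (fun j => D j • v j) (Finset.mem_univ k),
        hD]
    rw [← inv_smul_smul hDk.unit (v k), Units.smul_def hDk.unit, IsUnit.unit_spec, hsplit]
    refine smul_mem _ _ (neg_mem (sum_mem fun j hj => smul_mem _ _ (subset_span ?_)))
    exact Set.mem_image_of_mem v (Finset.ne_of_mem_erase hj)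

theorem Matrix.exists_mul_eq_one_of_linearIndependent_row {m n K : Type*} [Fintype m]
    [DecidableEq m] [Fintype n] [Field K] {A : Matrix m n K} (hA : LinearIndependent K A.row) :
    ∃ B : Matrix n m K, A * B = 1 := by
  rw [← mulVec_surjective_iff_exists_right_inverse, ← coe_mulVecLin, ← LinearMap.range_eq_top]
  apply Submodule.eq_top_of_finrank_eq
  rw [Module.finrank_fintype_fun_eq_card, ← hA.rank_matrix]
  rfl

theorem LinearIndependent.map_ringHom {ι κ K L : Type*} [Fintype ι] [Fintype κ] [Field K]
    [Ring L] {v : ι → κ → K} (hv : LinearIndependent K v) (φ : K →+* L) :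
    LinearIndependent L fun j k => φ (v j k) := by
  classical
  obtain ⟨B, hB⟩ := Matrix.exists_mul_eq_one_of_linearIndependent_row (A := Matrix.of v) hv
  have hφ : (Matrix.of v).map φ * B.map φ = 1 := by
    rw [← Matrix.map_mul, hB, Matrix.map_one _ φ.map_zero φ.map_one]
  refine Matrix.vecMul_injective_iff.1 fun x x' (hxx' : Matrix.vecMul x ((Matrix.of v).map φ) =
    Matrix.vecMul x' ((Matrix.of v).map φ)) => ?_
  simpa [Matrix.vecMul_vecMul, hφ] using congrArg (Matrix.vecMul · (B.map φ)) hxx'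

namespace IsLocalRing

variable {R : Type*} [CommRing R] [IsLocalRing R]

instance (p : ℕ) [Fact p.Prime] [CharP R p] : CharP (ResidueField R) p :=
  (CharP.charP_iff_prime_eq_zero Fact.out).2 <| by
    rw [← map_natCast (residue R) p, CharP.cast_eq_zero, map_zero]

theorem linearIndependent_residue_of_minimal {ι κ M : Type*} [Fintype ι] [Fintype κ]
    [AddCommGroup M] [Module R M] {y : ι → M} {z : κ → M} {a : ι → κ → R}
    (hy : ∀ j, y j ∉ span R (y '' {j}ᶜ)) (hyz : ∀ j, ∑ k, a j k • z k = y j)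
    (hzy : ∀ k, z k ∈ span R (Set.range y)) :
    LinearIndependent (ResidueField R) fun j k => residue R (a j k) := by
  rw [Fintype.linearIndependent_iff]
  intro g hg j₀
  by_contra hgj₀
  choose G hG using fun j => residue_surjective (g j)
  have hcoeff : ∀ k, ∑ j, G j * a j k ∈ maximalIdeal R := fun k => by
    rw [← residue_eq_zero_iff, map_sum]
    simpa [hG] using congrFun hg k
  have hmem : ∑ j, G j • y j ∈ maximalIdeal R • span R (Set.range y) := by
    rw [Finset.sum_congr rfl fun j _ => congrArg (G j • ·) (hyz j).symm, sum_smul_sum_smul]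
    exact sum_mem fun k _ => smul_mem_smul (hcoeff k) (hzy k)
  obtain ⟨t, ht, hGt⟩ := (mem_ideal_smul_span_iff_exists_sum _ _ _).1 hmem
  rw [Finsupp.sum_fintype t (fun j c => c • y j) fun _ => zero_smul _ _] at hGt
  refine hy j₀ ((mem_span_image_compl_iff_exists_isUnit y j₀).2 ⟨G - t, ?_, ?_⟩)
  · rw [← residue_ne_zero_iff_isUnit]
    simpa [hG, (residue_eq_zero_iff _).2 (ht j₀)] using hgj₀
  · simp [sub_smul, Finset.sum_sub_distrib, hGt]

theorem exists_isUnit_sum_mul_pow {ι κ : Type*} [Fintype ι] [Fintype κ]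
    (p : ℕ) [Fact p.Prime] [CharP R p] {a : ι → κ → R}
    (ha : LinearIndependent (ResidueField R) fun j k => residue R (a j k)) {D : ι → R} {i : ι}
    (hD : IsUnit (D i)) (e : ℕ) : ∃ k, IsUnit (∑ j, D j * a j k ^ p ^ e) := by
  by_contra! h
  have hφ := ha.map_ringHom (iterateFrobenius (ResidueField R) p e)
  refine (residue_ne_zero_iff_isUnit _).2 hD
    (Fintype.linearIndependent_iff.1 hφ (fun j => residue R (D j)) ?_ i)
  ext k
  have := mt (residue_ne_zero_iff_isUnit _).1 (h k)
  simpa [iterateFrobenius_def, map_sum] using this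

end IsLocalRing

section Frobenius

variable (R : Type*) [CommRing R] (p : ℕ) [Fact p.Prime] [CharP R p]
  (M : Type*) [AddCommGroup M] [Module R M]

def toFrobTwist (e : ℕ) : R ≃+* FrobTwist R p e := RingEquiv.refl R

variable {R p M}

theorem algebraMap_frobTwist (e : ℕ) (r : R) :
    algebraMap R (FrobTwist R p e) r = toFrobTwist R p e (r ^ p ^ e) :=
  iterateFrobenius_def p e r

theorem frobMap_smul (e : ℕ) (r : R) (x : M) :
    frobMap R p M e (r • x) = algebraMap R (FrobTwist R p e) r • frobMap R p M e x := by
  change (1 : FrobTwist R p e) ⊗ₜ[R] (r • x) =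
    algebraMap R (FrobTwist R p e) r • ((1 : FrobTwist R p e) ⊗ₜ[R] x)
  rw [TensorProduct.smul_tmul', smul_eq_mul, mul_one, ← TensorProduct.smul_tmul,
    Algebra.smul_def, mul_one]

variable (R p M) in
noncomputable def frobSemilinearMap (e : ℕ) :
    M →ₛₗ[algebraMap R (FrobTwist R p e)] FrobModule R p M e where
  toFun := frobMap R p M e
  map_add' := TensorProduct.tmul_add 1
  map_smul' := frobMap_smul e

theorem frobPow_span (e : ℕ) (S : Set M) :
    frobPow R p M e (span R S) = span (FrobTwist R p e) (frobMap R p M e '' S) := by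
  refine le_antisymm (span_le.2 <| Set.image_subset_iff.2 ?_)
    (span_mono (Set.image_mono subset_span))
  exact span_le (p := comap (frobSemilinearMap R p M e) (span _ (frobMap R p M e '' S))).2
    fun x hx => subset_span (Set.mem_image_of_mem _ hx)

theorem frobMap_sum_smul {κ : Type*} [Fintype κ] (e : ℕ) (a : κ → R) (z : κ → M) :
    frobMap R p M e (∑ k, a k • z k) =
      ∑ k, toFrobTwist R p e (a k ^ p ^ e) • frobMap R p M e (z k) := by
  have h := map_sum (frobSemilinearMap R p M e) (fun k => a k • z k) Finset.univ
  simp only [map_smulₛₗ, algebraMap_frobTwist] at h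
  exact h

theorem mem_frobClSet_span_image_compl_iff {ι : Type*} [Fintype ι] (v : ι → M) (i : ι) :
    v i ∈ frobClSet R p M (span R (v '' {i}ᶜ)) ↔ ∃ e, ∃ D : ι → R, IsUnit (D i) ∧
      ∑ j, toFrobTwist R p e (D j) • frobMap R p M e (v j) = 0 := by
  simp only [frobClSet, Set.mem_ofPred_eq, frobPow_span, Set.image_image]
  refine exists_congr fun e => ?_
  rw [mem_span_image_compl_iff_exists_isUnit (fun j => frobMap R p M e (v j))]
  constructor
  · rintro ⟨D, hD, h⟩
    exact ⟨(toFrobTwist R p e).symm ∘ D, by simpa using hD, by simpa using h⟩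
  · rintro ⟨D, hD, h⟩
    exact ⟨toFrobTwist R p e ∘ D, by simpa using hD, h⟩

end Frobenius

theorem F_independent_gives_strongly_F_independent_general
    (R : Type*) [CommRing R] [IsLocalRing R]
    (p : ℕ) [Fact p.Prime] [CharP R p]
    (M : Type*) [AddCommGroup M] [Module R M]
    (n : ℕ) (z : Fin n → M)
    (hz : ∀ i : Fin n,
      z i ∉ frobClSet R p M (Submodule.span R {x | ∃ j, j ≠ i ∧ x = z j}))
    (m : ℕ) (y : Fin m → M)
    (hygen : Submodule.span R (Set.range y) = Submodule.span R (Set.range z))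
    (hymin : ∀ i : Fin m, y i ∉ Submodule.span R {x | ∃ j, j ≠ i ∧ x = y j}) :
    ∀ i : Fin m,
      y i ∉ frobClSet R p M (Submodule.span R {x | ∃ j, j ≠ i ∧ x = y j}) := by
  simp only [setOf_exists_ne_and_eq_eq_image_compl] at hz hymin ⊢
  intro i hi
  obtain ⟨e, D, hDi, hD⟩ := (mem_frobClSet_span_image_compl_iff y i).1 hi
  choose a ha using fun j => (mem_span_range_iff_exists_fun R).1
    (hygen ▸ subset_span (Set.mem_range_self j) : y j ∈ span R (Set.range z))
  have hzy : ∀ k, z k ∈ span R (Set.range y) :=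
    fun k => hygen ▸ subset_span (Set.mem_range_self k)
  obtain ⟨k, hk⟩ := IsLocalRing.exists_isUnit_sum_mul_pow p
    (IsLocalRing.linearIndependent_residue_of_minimal hymin ha hzy) hDi e
  refine hz k ((mem_frobClSet_span_image_compl_iff z k).2
    ⟨e, fun k => ∑ j, D j * a j k ^ p ^ e, hk, ?_⟩)
  simp only [← ha, frobMap_sum_smul, sum_smul_sum_smul] at hD
  simpa only [map_sum, map_mul] using hD

/-- If `z 1, …, z n` are `F`-independent elements of a finitely
generated module `M` over a Noetherian local ring of characteristic `p > 0`, then the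
submodule `L` they generate is strongly `F`-independent: every minimal generating set
`y 1, …, y m` of `L` is `F`-independent. -/
theorem F_independent_gives_strongly_F_independent
    (R : Type*) [CommRing R] [IsNoetherianRing R] [IsLocalRing R]
    (p : ℕ) [Fact p.Prime] [CharP R p]
    (M : Type*) [AddCommGroup M] [Module R M] [Module.Finite R M]
    (n : ℕ) (z : Fin n → M)
    (hz : ∀ i : Fin n,
      z i ∉ frobClSet R p M (Submodule.span R {x | ∃ j, j ≠ i ∧ x = z j}))
    (m : ℕ) (y : Fin m → M)
    (hygen : Submodule.span R (Set.range y) = Submodule.span R (Set.range z))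
    (hymin : ∀ i : Fin m, y i ∉ Submodule.span R {x | ∃ j, j ≠ i ∧ x = y j}) :
    ∀ i : Fin m,
      y i ∉ frobClSet R p M (Submodule.span R {x | ∃ j, j ≠ i ∧ x = y j}) :=
  F_independent_gives_strongly_F_independent_general R p M n z hz m y hygen hymin
end

section
/- Let (R,m) be a Noetherian local ring, I a proper ideal, x ∈ R, and n₀ ≥ 1. If x^{n₀} lies in the integral closure of m·I^{n₀}, then x^n lies in the integral closure of m·I^n for every n ≥ n₀. -/
/-- The integral closure `J̄` of an ideal `J`: elements `x` satisfying an equation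
`x ^ k + a 1 * x ^ (k-1) + ⋯ + a k = 0` with `a i ∈ J ^ i`. -/
def intCl {R : Type*} [CommRing R] (J : Ideal R) : Set R :=
  {x | ∃ k : ℕ, 0 < k ∧ ∃ a : ℕ → R, (∀ i, 1 ≤ i → i ≤ k → a i ∈ J ^ i) ∧
    x ^ k + ∑ i ∈ Finset.Icc 1 k, a i * x ^ (k - i) = 0}

/-- The special part of the integral closure of an ideal `I` of a local ring `(R,m)`:
`I^{-sp} = {x | x ^ n ∈ (m * I ^ n)‾ for some n ≥ 1}`. -/
def spIntCl {R : Type*} [CommRing R] [IsLocalRing R] (I : Ideal R) : Set R :=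
  {x | ∃ n : ℕ, 1 ≤ n ∧ x ^ n ∈ intCl (IsLocalRing.maximalIdeal R * I ^ n)}

/-!
Since `m I^{n₀} ⊆ I^{n₀}`, the hypothesis gives `x^{n₀} ∈ (I^{n₀})‾` and hence `x ∈ Ī`.
Integral closure is multiplicative, `J̄ · J'‾ ⊆ (J J')‾`, so
`x^n = x^{n₀} x^{n - n₀} ∈ (m I^{n₀})‾ (I^{n - n₀})‾ ⊆ (m I^n)‾`.
Both facts rest on the criterion `x ∈ J̄ ↔ x^{k+1} ∈ J (J + (x))^k` for some `k`: its converse is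
the determinant trick applied to the finitely generated ideal `(J + (x))^k`.
-/

open Ideal Polynomial

section IntegralClosure

variable {R : Type*} [CommRing R]

theorem intCl_mono {J J' : Ideal R} (hJ : J ≤ J') : intCl J ⊆ intCl J' := by
  rintro x ⟨k, hk, a, ha, heq⟩
  exact ⟨k, hk, a, fun i h1 h2 => pow_right_mono hJ i (ha i h1 h2), heq⟩

theorem mem_intCl_top (x : R) : x ∈ intCl (⊤ : Ideal R) :=
  ⟨1, one_pos, fun _ => -x, fun _ _ _ => by simp [top_pow], by simp⟩

theorem Ideal.sup_pow_succ_le (A B : Ideal R) (k : ℕ) :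
    (A ⊔ B) ^ (k + 1) ≤ A * (A ⊔ B) ^ k ⊔ B ^ (k + 1) := by
  induction k with
  | zero => simp
  | succ k ih =>
    rw [pow_succ' _ (k + 1), sup_mul]
    refine sup_le le_sup_left ?_
    calc B * (A ⊔ B) ^ (k + 1) ≤ B * (A * (A ⊔ B) ^ k ⊔ B ^ (k + 1)) := mul_mono_right ih
      _ = A * (B * (A ⊔ B) ^ k) ⊔ B ^ (k + 1 + 1) := by
        rw [mul_sup, mul_left_comm, ← pow_succ']
      _ ≤ A * (A ⊔ B) ^ (k + 1) ⊔ B ^ (k + 1 + 1) := by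
        rw [pow_succ' (A ⊔ B)]
        exact sup_le_sup_right (mul_mono_right (mul_mono_left le_sup_right)) _

theorem exists_pow_succ_mem_of_mem_intCl {J : Ideal R} {x : R} (hx : x ∈ intCl J) :
    ∃ k, x ^ (k + 1) ∈ J * (J ⊔ span {x}) ^ k := by
  obtain ⟨k, hk, a, ha, heq⟩ := hx
  obtain ⟨k, rfl⟩ := Nat.exists_eq_add_one_of_ne_zero hk.ne'
  refine ⟨k, ?_⟩
  rw [eq_neg_of_add_eq_zero_left heq]
  refine neg_mem (sum_mem fun i hi => ?_)
  obtain ⟨hi1, hik⟩ := Finset.mem_Icc.mp hi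
  obtain ⟨j, rfl⟩ := Nat.exists_eq_add_one_of_ne_zero (by omega : i ≠ 0)
  have hle : J ^ (j + 1) * span {x} ^ (k - j) ≤ J * (J ⊔ span {x}) ^ k := by
    rw [pow_succ', mul_assoc, ← Nat.add_sub_cancel' (by omega : j ≤ k), pow_add,
      Nat.add_sub_cancel_left]
    exact mul_mono_right (mul_mono (pow_right_mono le_sup_left _) (pow_right_mono le_sup_right _))
  refine hle (mul_mem_mul (ha _ hi1 hik) ?_)
  rw [span_singleton_pow, show k + 1 - (j + 1) = k - j by omega]
  exact mem_span_singleton_self _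

theorem span_singleton_mul_sup_pow_le {J : Ideal R} {x : R} {k : ℕ}
    (hx : x ^ (k + 1) ∈ J * (J ⊔ span {x}) ^ k) :
    span {x} * (J ⊔ span {x}) ^ k ≤ J * (J ⊔ span {x}) ^ k :=
  calc span {x} * (J ⊔ span {x}) ^ k ≤ (J ⊔ span {x}) ^ (k + 1) := by
        rw [pow_succ']; exact mul_mono_left le_sup_right
    _ ≤ J * (J ⊔ span {x}) ^ k ⊔ span {x} ^ (k + 1) := sup_pow_succ_le _ _ _
    _ ≤ J * (J ⊔ span {x}) ^ k := by
        rwa [sup_le_iff, span_singleton_pow, span_singleton_le_iff_mem, and_iff_right le_rfl]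

theorem mem_intCl_of_monic_of_eval_eq_zero {J : Ideal R} {x : R} {p : R[X]} (hp : p.Monic)
    (hcoeff : ∀ i, p.coeff i ∈ J ^ (p.natDegree - i)) (hx : p.eval x = 0) : x ∈ intCl J := by
  set d := p.natDegree
  rcases Nat.eq_zero_or_pos d with hd | hd
  · rw [hp.natDegree_eq_zero.mp hd, eval_one] at hx
    have := subsingleton_of_zero_eq_one hx.symm
    exact ⟨1, one_pos, 0, fun _ _ _ => zero_mem _, Subsingleton.elim _ _⟩
  refine ⟨d, hd, fun i => p.coeff (d - i), fun i _ hi => ?_, ?_⟩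
  · simpa [Nat.sub_sub_self hi] using hcoeff (d - i)
  · rw [← hx, eval_eq_sum_range, Finset.sum_range_succ, hp.coeff_natDegree, one_mul, add_comm]
    congr 1
    have := Finset.sum_Ico_reflect (fun j => p.coeff j * x ^ j) 1 (le_refl (d + 1))
    rwa [Nat.add_sub_cancel, Nat.sub_self, ← Finset.range_eq_Ico,
      Finset.Ico_add_one_right_eq_Icc] at this

theorem pow_mem_sup_span_singleton_pow (J : Ideal R) (x : R) (k : ℕ) :
    x ^ k ∈ (J ⊔ span {x}) ^ k :=
  pow_mem_pow (mem_sup_right (mem_span_singleton_self x)) k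

variable [IsNoetherianRing R]

theorem mem_intCl_of_span_singleton_mul_le {J M : Ideal R} {x : R} {N : ℕ}
    (hM : span {x} * M ≤ J * M) (hN : x ^ N ∈ M) : x ∈ intCl J := by
  have : Module.Finite R M := Module.Finite.iff_fg.mpr (IsNoetherian.noetherian M)
  let f : Module.End R M := algebraMap R _ x
  have hf : LinearMap.range f ≤ J • ⊤ := by
    rintro _ ⟨u, rfl⟩
    rw [Module.algebraMap_end_apply, Submodule.mem_smul_top_iff, Ideal.smul_eq_mul]
    exact hM (mul_mem_mul (mem_span_singleton_self x) u.2)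
  obtain ⟨p, hp, -, hcoeff, hpf⟩ :=
    LinearMap.exists_monic_and_natDegree_eq_and_coeff_mem_pow_and_aeval_eq_zero R f J hf
  have hpx : p.eval x * x ^ N = 0 := by
    have := congrArg (fun g : Module.End R M => (g ⟨x ^ N, hN⟩ : R)) hpf
    simpa [f, aeval_algebraMap_apply_eq_algebraMap_eval] using this
  refine mem_intCl_of_monic_of_eval_eq_zero ((monic_X_pow N).mul hp) (fun i => ?_)
    (by rw [eval_mul, eval_pow, eval_X, mul_comm, hpx])
  rw [coeff_X_pow_mul', (monic_X_pow N).natDegree_mul hp]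
  split_ifs with hi
  · exact pow_le_pow_right (by have := natDegree_X_pow_le (R := R) N; omega) (hcoeff (i - N))
  · exact zero_mem _

theorem mem_intCl_iff_exists_pow_succ_mem {J : Ideal R} {x : R} :
    x ∈ intCl J ↔ ∃ k, x ^ (k + 1) ∈ J * (J ⊔ span {x}) ^ k :=
  ⟨exists_pow_succ_mem_of_mem_intCl, fun ⟨k, hk⟩ => mem_intCl_of_span_singleton_mul_le
    (span_singleton_mul_sup_pow_le hk) (pow_mem_sup_span_singleton_pow J x k)⟩

theorem mem_intCl_of_pow_mem_intCl_pow {J : Ideal R} {x : R} {m : ℕ}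
    (hm : 0 < m) (h : x ^ m ∈ intCl (J ^ m)) : x ∈ intCl J := by
  obtain ⟨k, hk⟩ := exists_pow_succ_mem_of_mem_intCl h
  have hsup : J ^ m ⊔ span {x ^ m} ≤ (J ⊔ span {x}) ^ m :=
    sup_le (pow_right_mono le_sup_left m)
      (by rw [← span_singleton_pow]; exact pow_right_mono le_sup_right m)
  have hexp : m * (k + 1) - 1 = (m - 1) + m * k := by rw [mul_add_one]; omega
  have hle : J ^ m * (J ^ m ⊔ span {x ^ m}) ^ k ≤ J * (J ⊔ span {x}) ^ (m * (k + 1) - 1) :=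
    calc
      _ ≤ J ^ m * (J ⊔ span {x}) ^ (m * k) := by
        rw [pow_mul]; exact mul_mono_right (pow_right_mono hsup k)
      _ = J * (J ^ (m - 1) * (J ⊔ span {x}) ^ (m * k)) := by
        rw [← mul_assoc, ← pow_succ', Nat.sub_add_cancel hm]
      _ ≤ J * (J ⊔ span {x}) ^ (m * (k + 1) - 1) := by
        rw [hexp, pow_add]
        exact mul_mono_right (mul_mono_left (pow_right_mono le_sup_left _))
  refine mem_intCl_iff_exists_pow_succ_mem.mpr ⟨m * (k + 1) - 1, ?_⟩
  rw [Nat.sub_add_cancel (Nat.mul_pos hm k.succ_pos), pow_mul]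
  exact hle hk

theorem mul_mem_intCl_mul {J J' : Ideal R} {y z : R}
    (hy : y ∈ intCl J) (hz : z ∈ intCl J') : y * z ∈ intCl (J * J') := by
  obtain ⟨k, hk⟩ := exists_pow_succ_mem_of_mem_intCl hy
  obtain ⟨k', hk'⟩ := exists_pow_succ_mem_of_mem_intCl hz
  set M := (J ⊔ span {y}) ^ k
  set M' := (J' ⊔ span {z}) ^ k'
  refine mem_intCl_of_span_singleton_mul_le (M := M * M') (N := k + k') ?_ ?_
  · calc span {y * z} * (M * M') = (span {y} * M) * (span {z} * M') := by
          rw [← span_singleton_mul_span_singleton]; ring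
      _ ≤ (J * M) * (J' * M') :=
          mul_mono (span_singleton_mul_sup_pow_le hk) (span_singleton_mul_sup_pow_le hk')
      _ = J * J' * (M * M') := by ring
  · rw [mul_pow, pow_add, pow_add]
    exact mul_mem_mul (M.mul_mem_right _ (pow_mem_sup_span_singleton_pow J y k))
      (M'.mul_mem_left _ (pow_mem_sup_span_singleton_pow J' z k'))

theorem pow_mem_intCl_pow {J : Ideal R} {x : R} (hx : x ∈ intCl J) :
    ∀ d : ℕ, x ^ d ∈ intCl (J ^ d)
  | 0 => by simpa only [pow_zero, one_eq_top] using mem_intCl_top 1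
  | d + 1 => by simpa only [pow_succ] using mul_mem_intCl_mul (pow_mem_intCl_pow hx d) hx

end IntegralClosure

theorem spIntCl_asymptotic_general
    {R : Type*} [CommRing R] [IsNoetherianRing R] [IsLocalRing R]
    (I : Ideal R) (x : R) (n₀ : ℕ) (hn₀ : 1 ≤ n₀)
    (h : x ^ n₀ ∈ intCl (IsLocalRing.maximalIdeal R * I ^ n₀)) :
    ∀ n ≥ n₀, x ^ n ∈ intCl (IsLocalRing.maximalIdeal R * I ^ n) := by
  intro n hn
  have hxI : x ∈ intCl I := mem_intCl_of_pow_mem_intCl_pow hn₀ (intCl_mono mul_le_right h)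
  have hmul := mul_mem_intCl_mul h (pow_mem_intCl_pow hxI (n - n₀))
  rwa [← pow_add, mul_assoc, ← pow_add, Nat.add_sub_cancel' hn] at hmul

/-- Let `(R,m)` be Noetherian local, `I` a proper ideal, `x ∈ R` and
`n₀ ≥ 1`.  If `x ^ n₀ ∈ (m * I ^ n₀)‾`, then `x ^ n ∈ (m * I ^ n)‾` for all `n ≥ n₀`. -/
theorem spIntCl_asymptotic
    {R : Type*} [CommRing R] [IsNoetherianRing R] [IsLocalRing R]
    (I : Ideal R) (hI : I ≠ ⊤) (x : R) (n₀ : ℕ) (hn₀ : 1 ≤ n₀)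
    (h : x ^ n₀ ∈ intCl (IsLocalRing.maximalIdeal R * I ^ n₀)) :
    ∀ n ≥ n₀, x ^ n ∈ intCl (IsLocalRing.maximalIdeal R * I ^ n) :=
  spIntCl_asymptotic_general I x n₀ hn₀ h
end

section
/- Let S be a standard ℕ-graded Noetherian domain over a field k with irrelevant maximal ideal m, J a homogeneous ideal, and n the minimal degree of a homogeneous generator of J. Then no homogeneous element of degree ≤ n belongs to the special part of the integral closure J^{-sp}. -/
section aux

open DirectSum

variable {k S : Type*} [Field k] [CommRing S] [Algebra k S]
  (𝒜 : ℕ → Submodule k S) [GradedAlgebra 𝒜]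

lemma proj_of_mem_ne {e i : ℕ} {z : S} (hz : z ∈ 𝒜 e) (h : e ≠ i) :
    GradedRing.proj 𝒜 i z = 0 := by
  rw [GradedRing.proj_apply, DirectSum.decompose_of_mem_ne 𝒜 hz h]

lemma proj_of_mem_same {e : ℕ} {z : S} (hz : z ∈ 𝒜 e) :
    GradedRing.proj 𝒜 e z = z := by
  rw [GradedRing.proj_apply, DirectSum.decompose_of_mem_same 𝒜 hz]

lemma proj_mem (i : ℕ) (z : S) : GradedRing.proj 𝒜 i z ∈ 𝒜 i := by
  rw [GradedRing.proj_apply]; exact SetLike.coe_mem _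

open Classical in
lemma proj_mul_expand (x y : S) (i : ℕ) :
    GradedRing.proj 𝒜 i (x * y) =
      ∑ j ∈ (decompose 𝒜 x).support, ∑ l ∈ (decompose 𝒜 y).support,
        if j + l = i then GradedRing.proj 𝒜 j x * GradedRing.proj 𝒜 l y else 0 := by
  conv_lhs => rw [← DirectSum.sum_support_decompose 𝒜 x, ← DirectSum.sum_support_decompose 𝒜 y]
  rw [Finset.sum_mul_sum, map_sum]
  refine Finset.sum_congr rfl fun j _ => ?_
  rw [map_sum]
  refine Finset.sum_congr rfl fun l _ => ?_
  have hmem : ((decompose 𝒜 x j : S) * (decompose 𝒜 y l : S)) ∈ 𝒜 (j + l) :=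
    SetLike.mul_mem_graded (SetLike.coe_mem _) (SetLike.coe_mem _)
  by_cases h : j + l = i
  · subst h
    simp only [if_pos rfl, GradedRing.proj_apply, if_true]
    rw [DirectSum.decompose_of_mem_same 𝒜 hmem]
  · rw [if_neg h, proj_of_mem_ne 𝒜 hmem h]

lemma low_mul_low {a b : ℕ} {x y : S}
    (hx : ∀ i < a, GradedRing.proj 𝒜 i x = 0) (hy : ∀ i < b, GradedRing.proj 𝒜 i y = 0) :
    ∀ i < a + b, GradedRing.proj 𝒜 i (x * y) = 0 := by
  classical
  intro i hi
  rw [proj_mul_expand]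
  refine Finset.sum_eq_zero fun j hj => Finset.sum_eq_zero fun l hl => ?_
  have hjx : GradedRing.proj 𝒜 j x ≠ 0 := by
    rw [GradedRing.proj_apply]
    exact fun hc => DFinsupp.mem_support_iff.mp hj (ZeroMemClass.coe_eq_zero.mp hc)
  have hly : GradedRing.proj 𝒜 l y ≠ 0 := by
    rw [GradedRing.proj_apply]
    exact fun hc => DFinsupp.mem_support_iff.mp hl (ZeroMemClass.coe_eq_zero.mp hc)
  have haj : a ≤ j := le_of_not_gt fun hja => hjx (hx j hja)
  have hbl : b ≤ l := le_of_not_gt fun hlb => hly (hy l hlb)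
  rw [if_neg (by omega)]

lemma low_mul_proj {a b : ℕ} {x y : S}
    (hx : ∀ i < a, GradedRing.proj 𝒜 i x = 0) (hy : ∀ i < b, GradedRing.proj 𝒜 i y = 0) :
    GradedRing.proj 𝒜 (a + b) (x * y) =
      GradedRing.proj 𝒜 a x * GradedRing.proj 𝒜 b y := by
  set px := GradedRing.proj 𝒜 a x with hpx
  set py := GradedRing.proj 𝒜 b y with hpy
  have hpxl : ∀ i < a + 1, GradedRing.proj 𝒜 i (x - px) = 0 := by
    intro i hi
    rw [map_sub]
    rcases Nat.lt_succ_iff_lt_or_eq.mp hi with h | h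
    · rw [hx i h, proj_of_mem_ne 𝒜 (proj_mem 𝒜 a x) (by omega), sub_zero]
    · rw [h, hpx, proj_of_mem_same 𝒜 (proj_mem 𝒜 a x), sub_self]
  have hpyl : ∀ i < b + 1, GradedRing.proj 𝒜 i (y - py) = 0 := by
    intro i hi
    rw [map_sub]
    rcases Nat.lt_succ_iff_lt_or_eq.mp hi with h | h
    · rw [hy i h, proj_of_mem_ne 𝒜 (proj_mem 𝒜 b y) (by omega), sub_zero]
    · rw [h, hpy, proj_of_mem_same 𝒜 (proj_mem 𝒜 b y), sub_self]
  have hpxa : ∀ i < a, GradedRing.proj 𝒜 i px = 0 := by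
    intro i hi; exact proj_of_mem_ne 𝒜 (proj_mem 𝒜 a x) (by omega)
  have hpyb : ∀ i < b, GradedRing.proj 𝒜 i py = 0 := by
    intro i hi; exact proj_of_mem_ne 𝒜 (proj_mem 𝒜 b y) (by omega)
  have key : x * y = px * py + (px * (y - py) + ((x - px) * py + (x - px) * (y - py))) := by
    ring
  rw [key, map_add, map_add, map_add]
  rw [proj_of_mem_same 𝒜 (SetLike.mul_mem_graded (proj_mem 𝒜 a x) (proj_mem 𝒜 b y))]
  rw [low_mul_low 𝒜 hpxa hpyl (a + b) (by omega)]
  rw [low_mul_low 𝒜 hpxl hpyb (a + b) (by omega)]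
  rw [low_mul_low 𝒜 hpxl hpyl (a + b) (by omega)]
  ring

lemma low_pow {v : ℕ} {z : S} (hz : ∀ i < v, GradedRing.proj 𝒜 i z = 0) (t : ℕ) :
    (∀ i < t * v, GradedRing.proj 𝒜 i (z ^ t) = 0) ∧
      GradedRing.proj 𝒜 (t * v) (z ^ t) = (GradedRing.proj 𝒜 v z) ^ t := by
  induction t with
  | zero =>
    refine ⟨fun i hi => by omega, ?_⟩
    rw [pow_zero, pow_zero, Nat.zero_mul]
    exact proj_of_mem_same 𝒜 (SetLike.one_mem_graded 𝒜)
  | succ t ih =>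
    constructor
    · intro i hi
      rw [pow_succ]
      exact low_mul_low 𝒜 ih.1 hz i (by rw [Nat.succ_mul] at hi; omega)
    · rw [pow_succ, Nat.succ_mul, low_mul_proj 𝒜 ih.1 hz, ih.2, pow_succ]

/-- The ideal of elements all of whose homogeneous components in degrees `< c` vanish. -/
def lowFil (c : ℕ) : Ideal S where
  carrier := {x | ∀ i < c, GradedRing.proj 𝒜 i x = 0}
  add_mem' {x y} hx hy := fun i hi => by rw [map_add, hx i hi, hy i hi, add_zero]
  zero_mem' := fun i _ => map_zero _
  smul_mem' r x hx := by
    intro i hi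
    have h0 : ∀ j < 0, GradedRing.proj 𝒜 j r = 0 := fun j hj => absurd hj (Nat.not_lt_zero j)
    have := low_mul_low 𝒜 h0 hx i (by omega)
    simpa using this

lemma mem_lowFil {c : ℕ} {x : S} :
    x ∈ lowFil 𝒜 c ↔ ∀ i < c, GradedRing.proj 𝒜 i x = 0 := Iff.rfl

lemma mem_lowFil_of_mem_graded {c e : ℕ} {z : S} (hz : z ∈ 𝒜 e) (h : c ≤ e) :
    z ∈ lowFil 𝒜 c := fun i hi => proj_of_mem_ne 𝒜 hz (by omega)

lemma lowFil_mul {a b : ℕ} : lowFil 𝒜 a * lowFil 𝒜 b ≤ lowFil 𝒜 (a + b) :=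
  Ideal.mul_le.mpr fun r hr s hs => low_mul_low 𝒜 hr hs

lemma lowFil_pow {c : ℕ} (t : ℕ) : (lowFil 𝒜 c) ^ t ≤ lowFil 𝒜 (c * t) := by
  induction t with
  | zero => rw [pow_zero, Nat.mul_zero]; exact fun x _ => fun i hi => absurd hi (Nat.not_lt_zero i)
  | succ t ih =>
    rw [pow_succ]
    calc lowFil 𝒜 c ^ t * lowFil 𝒜 c ≤ lowFil 𝒜 (c * t) * lowFil 𝒜 c :=
          Ideal.mul_mono ih le_rfl
      _ ≤ lowFil 𝒜 (c * t + c) := lowFil_mul 𝒜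
      _ = lowFil 𝒜 (c * (t + 1)) := by ring_nf

lemma intCl_mono' {R : Type*} [CommRing R] {I J : Ideal R} (h : I ≤ J) (hp : ∀ t, I ^ t ≤ J ^ t) :
    intCl I ⊆ intCl J := by
  classical
  rintro x ⟨K, hK, a, ha, he⟩
  exact ⟨K, hK, a, fun i h1 h2 => hp i (ha i h1 h2), he⟩

lemma ideal_pow_mono {R : Type*} [CommRing R] {I J : Ideal R} (h : I ≤ J) (t : ℕ) :
    I ^ t ≤ J ^ t := by
  induction t with
  | zero => simp
  | succ t ih => rw [pow_succ, pow_succ]; exact Ideal.mul_mono ih h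

variable [IsDomain S]

lemma intCl_lowFil_le (c : ℕ) : intCl (lowFil 𝒜 c) ⊆ (lowFil 𝒜 c : Set S) := by
  classical
  rintro z ⟨K, hK, a, ha, he⟩
  by_contra hmem
  rw [SetLike.mem_coe, mem_lowFil] at hmem
  push_neg at hmem
  obtain ⟨i0, hi0c, hi0⟩ := hmem
  have hexi : ∃ i, GradedRing.proj 𝒜 i z ≠ 0 := ⟨i0, hi0⟩
  set v := Nat.find hexi with hv
  have hvne : GradedRing.proj 𝒜 v z ≠ 0 := Nat.find_spec hexi
  have hvlt : v < c := lt_of_le_of_lt (Nat.find_min' hexi hi0) hi0c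
  have hlow : ∀ i < v, GradedRing.proj 𝒜 i z = 0 := fun i hi =>
    not_not.mp (Nat.find_min hexi hi)
  have h1 : GradedRing.proj 𝒜 (K * v) (z ^ K) = (GradedRing.proj 𝒜 v z) ^ K :=
    (low_pow 𝒜 hlow K).2
  have h2 : ∀ i ∈ Finset.Icc 1 K, GradedRing.proj 𝒜 (K * v) (a i * z ^ (K - i)) = 0 := by
    intro i hi
    obtain ⟨hi1, hiK⟩ := Finset.mem_Icc.mp hi
    have hai : a i ∈ lowFil 𝒜 (c * i) := lowFil_pow 𝒜 i (ha i hi1 hiK)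
    have hzi : ∀ j < (K - i) * v, GradedRing.proj 𝒜 j (z ^ (K - i)) = 0 :=
      (low_pow 𝒜 hlow (K - i)).1
    have hlt : K * v < c * i + (K - i) * v := by
      have e1 : (v + 1) * i ≤ c * i := Nat.mul_le_mul_right i hvlt
      have e2 : (K - i) * v + i * v = K * v := by
        rw [← Nat.add_mul, Nat.sub_add_cancel hiK]
      nlinarith
    exact low_mul_low 𝒜 hai hzi (K * v) hlt
  have h0 := congrArg (GradedRing.proj 𝒜 (K * v)) he
  rw [map_add, map_sum, map_zero, h1, Finset.sum_eq_zero h2, add_zero] at h0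
  exact pow_ne_zero K hvne h0

lemma lowFil_of_pow_mem {y : S} {t c' n : ℕ} (h : y ^ t ∈ lowFil 𝒜 c') (hc : t * n < c') :
    y ∈ lowFil 𝒜 (n + 1) := by
  classical
  by_contra hmem
  rw [mem_lowFil] at hmem
  push_neg at hmem
  obtain ⟨i0, hi0c, hi0⟩ := hmem
  have hexi : ∃ i, GradedRing.proj 𝒜 i y ≠ 0 := ⟨i0, hi0⟩
  have hvne : GradedRing.proj 𝒜 (Nat.find hexi) y ≠ 0 := Nat.find_spec hexi
  have hvle : Nat.find hexi ≤ n := le_trans (Nat.find_min' hexi hi0) (by omega)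
  have hlow : ∀ i < Nat.find hexi, GradedRing.proj 𝒜 i y = 0 := fun i hi =>
    not_not.mp (Nat.find_min hexi hi)
  have h1 : GradedRing.proj 𝒜 (t * Nat.find hexi) (y ^ t) = (GradedRing.proj 𝒜 (Nat.find hexi) y) ^ t :=
    (low_pow 𝒜 hlow t).2
  have h2 : GradedRing.proj 𝒜 (t * Nat.find hexi) (y ^ t) = 0 :=
    h _ (lt_of_le_of_lt (Nat.mul_le_mul_left t hvle) hc)
  rw [h1] at h2
  exact pow_ne_zero t hvne h2

end aux

/-- Let `S` be a standard ℕ-graded Noetherian domain over a field `k`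
with irrelevant maximal ideal `m`, `J` a homogeneous ideal, and `n` the lowest degree
among the degrees of a homogeneous generating set of `J`.  Then the special part of the
integral closure `J^{-sp}` (the ideal generated by the homogeneous `x` with
`x ^ t ∈ (m * J ^ t)‾` for some `t ≥ 1`) contains no nonzero homogeneous element of
degree at most `n`. -/
theorem graded_spIntCl_low_degree
    {k S : Type*} [Field k] [CommRing S] [IsDomain S] [IsNoetherianRing S] [Algebra k S]
    (𝒜 : ℕ → Submodule k S) [GradedAlgebra 𝒜]
    (hstd0 : 𝒜 0 = 1) (hstd : ∀ i : ℕ, 𝒜 (i + 1) = 𝒜 1 * 𝒜 i)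
    (m : Ideal S) (hm : m = (HomogeneousIdeal.irrelevant 𝒜).toIdeal)
    (J : Ideal S) (hJ : J.IsHomogeneous 𝒜)
    (gens : Set S) (hgens : J = Ideal.span gens) (n : ℕ)
    (hdeg : ∀ g ∈ gens, ∃ d : ℕ, n ≤ d ∧ g ∈ 𝒜 d)
    (hex : ∃ g ∈ gens, g ≠ 0 ∧ g ∈ 𝒜 n) :
    ∀ d ≤ n, ∀ x ∈ 𝒜 d,
      x ∈ Ideal.span {y : S | (∃ e : ℕ, y ∈ 𝒜 e) ∧
        ∃ t : ℕ, 1 ≤ t ∧ y ^ t ∈ intCl (m * J ^ t)} → x = 0 := by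
  classical
  intro d hd x hx hxspan
  have hmJ : ∀ t : ℕ, 1 ≤ t → m * J ^ t ≤ lowFil 𝒜 (1 + n * t) := by
    intro t ht
    have hm1 : m ≤ lowFil 𝒜 1 := by
      intro z hz
      rw [hm] at hz
      have h0 : GradedRing.proj 𝒜 0 z = 0 :=
        (HomogeneousIdeal.mem_irrelevant_iff 𝒜 z).mp hz
      intro i hi
      obtain rfl := Nat.lt_one_iff.mp hi
      exact h0
    have hJn : J ≤ lowFil 𝒜 n := by
      rw [hgens, Ideal.span_le]
      intro g hg
      obtain ⟨dg, hdg, hgmem⟩ := hdeg g hg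
      exact mem_lowFil_of_mem_graded 𝒜 hgmem hdg
    calc m * J ^ t ≤ lowFil 𝒜 1 * lowFil 𝒜 (n * t) :=
          Ideal.mul_mono hm1 (le_trans (ideal_pow_mono hJn t) (lowFil_pow 𝒜 t))
      _ ≤ lowFil 𝒜 (1 + n * t) := lowFil_mul 𝒜
  have hY : {y : S | (∃ e : ℕ, y ∈ 𝒜 e) ∧ ∃ t : ℕ, 1 ≤ t ∧ y ^ t ∈ intCl (m * J ^ t)} ⊆
      (lowFil 𝒜 (n + 1) : Set S) := by
    rintro y ⟨-, t, ht, hyt⟩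
    have h1 : y ^ t ∈ intCl (lowFil 𝒜 (1 + n * t)) :=
      intCl_mono' (hmJ t ht) (fun s => ideal_pow_mono (hmJ t ht) s) hyt
    have h2 : y ^ t ∈ lowFil 𝒜 (1 + n * t) := intCl_lowFil_le 𝒜 _ h1
    exact lowFil_of_pow_mem 𝒜 h2 (by rw [Nat.mul_comm t n]; omega)
  have hxl : x ∈ lowFil 𝒜 (n + 1) := (Ideal.span_le.mpr hY) hxspan
  have hz := hxl d (by omega)
  rwa [proj_of_mem_same 𝒜 hx] at hz
end
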